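/- Let r ≥ 1 and n ≥ r+1, and let I_r(K_n) be the ideal of K[x_1,…,x_n] generated by all squarefree monomials of degree r+1. Then the graded Betti numbers of R/I_r(K_n) satisfy β_{i, i+r}(R/I_r(K_n)) = C(i+r-1, r) · C(n, i+r) for 1 ≤ i ≤ n−r, and β_{i, i+d}(R/I_r(K_n)) = 0 for all d ≠ r with (i,d) ≠ (0,0). -/

import Mathlib

open Finset

/-- An (abstract) simplicial complex on vertex type `V`: a downward-closed collection of
finite subsets of `V`. -/
structure SC (V : Type*) where
  faces : Set (Finset V)
  down : ∀ ⦃F G : Finset V⦄, F ∈ faces → G ⊆ F → G ∈ faces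

variable {V : Type*} [LinearOrder V] (K : Type*) [Field K]

/-- The faces of `Δ` of cardinality `k` (the `(k-1)`-dimensional faces). -/
def SC.face (Δ : SC V) (k : ℕ) : Type _ := {F : Finset V // F ∈ Δ.faces ∧ F.card = k}

/-- The `k`-th term of the reduced simplicial chain complex of `Δ` over `K`: the free
`K`-vector space on the faces of cardinality `k` (so degree `k` corresponds to simplicial
dimension `k - 1`; degree `0` is spanned by the empty face). -/
abbrev SC.chain (Δ : SC V) (k : ℕ) : Type _ := Δ.face k →₀ K

/-- The simplicial boundary map `C_{k+1} → C_k`, with the usual alternating signs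
determined by the linear order on the vertices. -/
noncomputable def SC.bdry (Δ : SC V) (k : ℕ) : Δ.chain K (k + 1) →ₗ[K] Δ.chain K k :=
  Finsupp.lsum K fun F => LinearMap.toSpanSingleton K _
    (∑ x ∈ F.1.attach,
      ((-1 : K) ^ ((F.1.filter (fun y => y < x.1)).card)) •
        Finsupp.single
          (⟨F.1.erase x.1, Δ.down F.2.1 (Finset.erase_subset _ _), by
              simp [Finset.card_erase_of_mem x.2, F.2.2]⟩ : Δ.face k)
          (1 : K))

/-- The boundary map out of degree `k` (the zero map in degree `0`). -/
noncomputable def SC.bdryTo (Δ : SC V) : (k : ℕ) → (Δ.chain K k →ₗ[K] Δ.chain K (k - 1))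
  | 0 => 0
  | (k + 1) => Δ.bdry K k

/-- The dimension over `K` of the degree-`k` reduced simplicial homology of `Δ`
(i.e. the reduced homology in simplicial dimension `k - 1`): since the image of the
boundary is contained in its kernel, this is `dim ker ∂_k − dim im ∂_{k+1}`. -/
noncomputable def SC.hdim (Δ : SC V) (k : ℕ) : ℕ :=
  Module.finrank K (LinearMap.ker (Δ.bdryTo K k)) -
    Module.finrank K (LinearMap.range (Δ.bdry K k))

/-- The induced subcomplex `Δ[W]` of `Δ` on a subset `W` of the vertices. -/
def SC.induce (Δ : SC V) (W : Finset V) : SC V :=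
  ⟨{F | F ∈ Δ.faces ∧ F ⊆ W}, fun F G hF hGF => ⟨Δ.down hF.1 hGF, hGF.trans hF.2⟩⟩

/-- The graded Betti numbers `β_{i,j}` of the Stanley–Reisner ring of `Δ` over `K`,
via Hochster's formula: `β_{i,j} = ∑_{W ⊆ V, |W| = j} dim_K H̃_{j-i-1}(Δ[W]; K)`. -/
noncomputable def SC.betti [Fintype V] (Δ : SC V) (i j : ℕ) : ℕ :=
  ∑ W ∈ Finset.univ.powersetCard j, (Δ.induce W).hdim K (j - i)

/-- The Castelnuovo–Mumford regularity of the Stanley–Reisner ring of `Δ` over `K`: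
`reg = max { d : β_{i,i+d} ≠ 0 for some i }`. -/
noncomputable def SC.reg [Fintype V] (Δ : SC V) : ℕ :=
  sSup {d : ℕ | ∃ i : ℕ, Δ.betti K i (i + d) ≠ 0}

/-- The Stanley–Reisner complex of the ideal `I_r(K_n)` generated by all squarefree
monomials of degree `r+1`: all subsets of the `n` vertices of cardinality at most `r`. -/
def skel (V : Type*) [LinearOrder V] (s : ℕ) : SC V :=
  ⟨{F | F.card ≤ s}, fun _ _ hF h => (Finset.card_le_card h).trans hF⟩

/-!
By Hochster's formula `β_{i,j}` adds up the reduced homology, in degree `j - i`, of the induced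
subcomplexes on the `j`-sets `W`, and each of these is the `(r-1)`-skeleton of the simplex on `W`.
Adding the least vertex `v` of `W` to a face is a contracting homotopy of its chain complex in the
degrees where this keeps faces inside the skeleton, i.e. below `r`; so the homology vanishes there,
and above `r` there are no chains at all. In degree `r`, exactness below `r` together with
rank–nullity and Pascal's rule gives `dim ker ∂ = C(|W| - 1, r)`, and there are `C(n, j)` sets `W`.
-/

theorem card_filter_lt_erase_of_lt (s : Finset V) {x y : V} (h : y < x) :
    #((s.erase x).filter (· < y)) = #(s.filter (· < y)) := by
  rw [filter_erase, erase_eq_of_notMem (by simp [h.not_gt])]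

theorem card_filter_lt_erase_of_gt (s : Finset V) {x y : V} (hy : y ∈ s) (h : y < x) :
    #((s.erase y).filter (· < x)) = #(s.filter (· < x)) - 1 := by
  rw [filter_erase, card_erase_of_mem (by simp [hy, h])]

theorem neg_one_pow_mul_neg_one_pow_eq_neg {R : Type*} [Ring R] {a b c d : ℕ}
    (h : a + b + 1 = c + d) : (-1 : R) ^ a * (-1) ^ b = -((-1) ^ c * (-1) ^ d) := by
  rw [← pow_add, ← pow_add, ← h, pow_succ, mul_neg_one, neg_neg]

theorem neg_one_pow_card_filter_lt_erase_antisymm {R : Type*} [Ring R] {s : Finset V} {x y : V}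
    (hx : x ∈ s) (hy : y ∈ s) (hxy : x ≠ y) :
    (-1 : R) ^ #(s.filter (· < x)) * (-1) ^ #((s.erase x).filter (· < y)) =
      -((-1) ^ #(s.filter (· < y)) * (-1) ^ #((s.erase y).filter (· < x))) := by
  wlog h : x < y generalizing x y
  · rw [this hy hx hxy.symm (hxy.symm.lt_of_le (not_lt.1 h)), neg_neg]
  have hpos : 0 < #(s.filter (· < y)) := card_pos.2 ⟨x, by simp [hx, h]⟩
  apply neg_one_pow_mul_neg_one_pow_eq_neg
  rw [card_filter_lt_erase_of_gt s hx h, card_filter_lt_erase_of_lt s h]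
  omega

namespace SC

variable (Δ : SC V) {v : V}

open scoped Classical in
noncomputable def faceChain (k : ℕ) (s : Finset V) : Δ.chain K k :=
  if h : s ∈ Δ.faces ∧ s.card = k then Finsupp.single (α := Δ.face k) ⟨s, h⟩ 1 else 0

omit [LinearOrder V] in
theorem faceChain_of_mem {k : ℕ} {s : Finset V} (h : s ∈ Δ.faces) (hs : s.card = k) :
    Δ.faceChain K k s = Finsupp.single (α := Δ.face k) ⟨s, h, hs⟩ 1 :=
  dif_pos ⟨h, hs⟩

omit [LinearOrder V] in
theorem faceChain_val {k : ℕ} (F : Δ.face k) : Δ.faceChain K k F.1 = Finsupp.single F 1 :=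
  dif_pos F.2

theorem bdry_single (k : ℕ) (F : Δ.face (k + 1)) :
    Δ.bdry K k (Finsupp.single F 1) =
      ∑ x ∈ F.1, (-1 : K) ^ #(F.1.filter (· < x)) • Δ.faceChain K k (F.1.erase x) := by
  rw [bdry, Finsupp.lsum_single, LinearMap.toSpanSingleton_apply, one_smul,
    ← sum_attach F.1]
  refine sum_congr rfl fun x _ => ?_
  rw [faceChain_of_mem K Δ (Δ.down F.2.1 (erase_subset _ _))
    (by simp [card_erase_of_mem x.2, F.2.2])]
  rfl

theorem bdry_faceChain (k : ℕ) {s : Finset V} (h : s ∈ Δ.faces) (hs : s.card = k + 1) :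
    Δ.bdry K k (Δ.faceChain K (k + 1) s) =
      ∑ x ∈ s, (-1 : K) ^ #(s.filter (· < x)) • Δ.faceChain K k (s.erase x) := by
  rw [faceChain_of_mem K Δ h hs]
  exact bdry_single K Δ k ⟨s, h, hs⟩

theorem bdry_comp_bdry (k : ℕ) : (Δ.bdry K k).comp (Δ.bdry K (k + 1)) = 0 := by
  ext F : 2
  simp only [LinearMap.comp_apply, Finsupp.lsingle_apply, LinearMap.zero_apply]
  rw [bdry_single, map_sum]
  have hF : ∀ x ∈ F.1, Δ.bdry K k
      ((-1 : K) ^ #(F.1.filter (· < x)) • Δ.faceChain K (k + 1) (F.1.erase x)) =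
      ∑ y ∈ F.1.erase x, ((-1 : K) ^ #(F.1.filter (· < x)) *
        (-1) ^ #((F.1.erase x).filter (· < y))) • Δ.faceChain K k ((F.1.erase x).erase y) := by
    intro x hx
    rw [map_smul, bdry_faceChain K Δ k (Δ.down F.2.1 (erase_subset _ _))
      (by simp [card_erase_of_mem hx, F.2.2]), smul_sum]
    simp only [smul_smul]
  rw [sum_congr rfl hF, sum_sigma']
  refine sum_involution (fun p _ => ⟨p.2, p.1⟩) ?_ ?_ ?_ ?_
  · rintro ⟨x, y⟩ hp
    simp only [mem_sigma, mem_erase] at hp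
    rw [neg_one_pow_card_filter_lt_erase_antisymm hp.1 hp.2.2 (Ne.symm hp.2.1),
      erase_right_comm, neg_smul, neg_add_cancel]
  · rintro ⟨x, y⟩ hp - h
    simp only [mem_sigma, mem_erase] at hp
    exact hp.2.1 (congrArg Sigma.fst h)
  · rintro ⟨x, y⟩ hp
    simp only [mem_sigma, mem_erase] at hp ⊢
    exact ⟨hp.2.2, Ne.symm hp.2.1, hp.1⟩
  · intros
    rfl

noncomputable def cone (v : V) (k : ℕ) : Δ.chain K k →ₗ[K] Δ.chain K (k + 1) :=
  Finsupp.linearCombination K fun F : Δ.face k =>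
    if v ∈ F.1 then 0 else Δ.faceChain K (k + 1) (insert v F.1)

theorem cone_single {k : ℕ} (F : Δ.face k) :
    Δ.cone K v k (Finsupp.single F 1) =
      if v ∈ F.1 then 0 else Δ.faceChain K (k + 1) (insert v F.1) := by
  rw [cone, Finsupp.linearCombination_single, one_smul]

theorem cone_faceChain {k : ℕ} {s : Finset V} (h : s ∈ Δ.faces) (hs : s.card = k) :
    Δ.cone K v k (Δ.faceChain K k s) =
      if v ∈ s then 0 else Δ.faceChain K (k + 1) (insert v s) := by
  rw [faceChain_of_mem K Δ h hs]
  exact cone_single K Δ ⟨s, h, hs⟩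

theorem bdry_faceChain_insert {k : ℕ} {s : Finset V} (hv : ∀ x ∈ s, v < x)
    (h : insert v s ∈ Δ.faces) (hs : s.card = k) :
    Δ.bdry K k (Δ.faceChain K (k + 1) (insert v s)) =
      Δ.faceChain K k s -
        ∑ x ∈ s, (-1 : K) ^ #(s.filter (· < x)) • Δ.faceChain K k (insert v (s.erase x)) := by
  have hvs : v ∉ s := fun hvs => lt_irrefl v (hv v hvs)
  rw [bdry_faceChain K Δ k h (by rw [card_insert_of_notMem hvs, hs]), sum_insert hvs,
    filter_insert, if_neg (lt_irrefl v), erase_insert hvs,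
    filter_eq_empty_iff.2 fun x hx => (hv x hx).not_gt, card_empty, pow_zero, one_smul,
    sub_eq_add_neg, ← sum_neg_distrib]
  refine congrArg _ (sum_congr rfl fun x hx => ?_)
  rw [filter_insert, if_pos (hv x hx), card_insert_of_notMem (fun h => hvs (mem_filter.1 h).1),
    erase_insert_of_ne (hv x hx).ne, pow_succ, mul_neg_one, neg_smul]

theorem bdry_comp_cone_zero (hcone : ∀ F ∈ Δ.faces, #F ≤ 0 → insert v F ∈ Δ.faces) :
    (Δ.bdry K 0).comp (Δ.cone K v 0) = LinearMap.id := by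
  ext F : 2
  have hF : F.1 = ∅ := card_eq_zero.1 F.2.2
  simp only [LinearMap.comp_apply, Finsupp.lsingle_apply, LinearMap.id_apply]
  rw [cone_single, ← faceChain_val, hF, if_neg (notMem_empty v),
    bdry_faceChain_insert K Δ (by simp) (hcone ∅ (hF ▸ F.2.1) le_rfl) card_empty,
    sum_empty, sub_zero]

theorem bdry_comp_cone_add_cone_comp_bdry (hmin : ∀ F ∈ Δ.faces, ∀ x ∈ F, v ≤ x) (k : ℕ)
    (hcone : ∀ F ∈ Δ.faces, #F ≤ k + 1 → insert v F ∈ Δ.faces) :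
    (Δ.bdry K (k + 1)).comp (Δ.cone K v (k + 1)) + (Δ.cone K v k).comp (Δ.bdry K k) =
      LinearMap.id := by
  ext F : 2
  simp only [LinearMap.add_apply, LinearMap.comp_apply, Finsupp.lsingle_apply,
    LinearMap.id_apply]
  have hface : ∀ x ∈ F.1, F.1.erase x ∈ Δ.faces := fun x _ => Δ.down F.2.1 (erase_subset _ _)
  have hcard : ∀ x ∈ F.1, #(F.1.erase x) = k := fun x hx => by
    rw [card_erase_of_mem hx, F.2.2, Nat.add_sub_cancel]
  rw [cone_single, bdry_single, map_sum]
  by_cases hvF : v ∈ F.1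
  · have hsign : #(F.1.filter (· < v)) = 0 :=
      card_eq_zero.2 (filter_eq_empty_iff.2 fun x hx => not_lt.2 (hmin _ F.2.1 x hx))
    rw [if_pos hvF, map_zero, zero_add, sum_eq_single_of_mem v hvF, map_smul,
      cone_faceChain K Δ (hface v hvF) (hcard v hvF), if_neg (notMem_erase v _),
      insert_erase hvF, hsign, pow_zero, one_smul, faceChain_val]
    intro x hx hxv
    rw [map_smul, cone_faceChain K Δ (hface x hx) (hcard x hx),
      if_pos (mem_erase.2 ⟨Ne.symm hxv, hvF⟩), smul_zero]
  · have hlt : ∀ x ∈ F.1, v < x := fun x hx =>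
      (hmin _ (hcone F.1 F.2.1 F.2.2.le) x (mem_insert_of_mem hx)).lt_of_ne
        fun h => hvF (h ▸ hx)
    rw [if_neg hvF, bdry_faceChain_insert K Δ hlt (hcone F.1 F.2.1 F.2.2.le) F.2.2,
      faceChain_val]
    convert sub_add_cancel _ _ using 2
    refine sum_congr rfl fun x hx => ?_
    rw [map_smul, cone_faceChain K Δ (hface x hx) (hcard x hx),
      if_neg fun h => hvF (mem_of_mem_erase h)]

theorem ker_bdryTo_le_range_bdry (hmin : ∀ F ∈ Δ.faces, ∀ x ∈ F, v ≤ x) (k : ℕ)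
    (hcone : ∀ F ∈ Δ.faces, #F ≤ k → insert v F ∈ Δ.faces) :
    LinearMap.ker (Δ.bdryTo K k) ≤ LinearMap.range (Δ.bdry K k) := by
  intro z hz
  refine ⟨Δ.cone K v k z, ?_⟩
  cases k with
  | zero => exact LinearMap.congr_fun (bdry_comp_cone_zero K Δ hcone) z
  | succ k =>
    have hz : Δ.bdry K k z = 0 := hz
    simpa [hz] using LinearMap.congr_fun (bdry_comp_cone_add_cone_comp_bdry K Δ hmin k hcone) z

theorem range_bdry_le_ker_bdryTo (k : ℕ) :
    LinearMap.range (Δ.bdry K k) ≤ LinearMap.ker (Δ.bdryTo K k) := by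
  cases k with
  | zero => exact le_of_le_of_eq le_top LinearMap.ker_zero.symm
  | succ k => exact LinearMap.range_le_ker_iff.2 (bdry_comp_bdry K Δ k)

theorem hdim_eq_zero_of_cone {k : ℕ} [Finite (Δ.face k)] (hmin : ∀ F ∈ Δ.faces, ∀ x ∈ F, v ≤ x)
    (hcone : ∀ F ∈ Δ.faces, #F ≤ k → insert v F ∈ Δ.faces) : Δ.hdim K k = 0 :=
  Nat.sub_eq_zero_of_le (Submodule.finrank_mono (ker_bdryTo_le_range_bdry K Δ hmin k hcone))

omit [LinearOrder V] in
theorem finrank_chain (k : ℕ) [Finite (Δ.face k)] :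
    Module.finrank K (Δ.chain K k) = Nat.card (Δ.face k) := by
  have := Fintype.ofFinite (Δ.face k)
  rw [Module.finrank_finsupp_self, Nat.card_eq_fintype_card]

omit [LinearOrder V] in
instance finite_induce_face (W : Finset V) (k : ℕ) : Finite ((Δ.induce W).face k) :=
  Finite.of_injective (fun F => (⟨F.1, mem_powerset.2 F.2.1.2⟩ : W.powerset))
    fun _ _ h => Subtype.ext (Subtype.mk.inj h :)

end SC

namespace skel

variable {r k : ℕ} {W : Finset V}

theorem mem_induce_faces {F : Finset V} :
    F ∈ ((skel V r).induce W).faces ↔ #F ≤ r ∧ F ⊆ W :=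
  Iff.rfl

theorem card_induce_face (hk : k ≤ r) :
    Nat.card (((skel V r).induce W).face k) = (#W).choose k := by
  have e : ((skel V r).induce W).face k ≃ W.powersetCard k :=
    Equiv.subtypeEquivRight fun F => by
      rw [mem_induce_faces, mem_powersetCard]
      constructor
      · exact fun h => ⟨h.1.2, h.2⟩
      · exact fun h => ⟨⟨h.2 ▸ hk, h.1⟩, h.2⟩
  rw [Nat.card_congr e, Nat.card_eq_finsetCard, card_powersetCard]

theorem isEmpty_induce_face (hk : r < k) : IsEmpty (((skel V r).induce W).face k) :=
  ⟨fun F => (F.2.2 ▸ F.2.1.1 : k ≤ r).not_gt hk⟩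

theorem finrank_induce_chain (hk : k ≤ r) :
    Module.finrank K (((skel V r).induce W).chain K k) = (#W).choose k := by
  rw [SC.finrank_chain, card_induce_face hk]

theorem finrank_induce_chain_of_lt (hk : r < k) :
    Module.finrank K (((skel V r).induce W).chain K k) = 0 := by
  have := isEmpty_induce_face (W := W) hk
  exact Module.finrank_zero_of_subsingleton

theorem min'_le_of_mem_induce_faces (hW : W.Nonempty) :
    ∀ F ∈ ((skel V r).induce W).faces, ∀ x ∈ F, W.min' hW ≤ x :=
  fun _ hF _ hx => W.min'_le _ (hF.2 hx)

theorem insert_min'_mem_induce_faces (hW : W.Nonempty) (hk : k < r) :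
    ∀ F ∈ ((skel V r).induce W).faces, #F ≤ k →
      insert (W.min' hW) F ∈ ((skel V r).induce W).faces :=
  fun F hF hFk => mem_induce_faces.2
    ⟨(card_insert_le _ _).trans (by omega), insert_subset (W.min'_mem hW) hF.2⟩

theorem finrank_ker_induce_bdryTo (hW : W.Nonempty) :
    ∀ k ≤ r, Module.finrank K (LinearMap.ker (((skel V r).induce W).bdryTo K k)) =
      (#W - 1).choose k
  | 0, _ => by
    rw [SC.bdryTo, LinearMap.ker_zero, finrank_top, finrank_induce_chain K (Nat.zero_le r),
      Nat.choose_zero_right, Nat.choose_zero_right]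
  | k + 1, hk => by
    have hexact : LinearMap.ker (((skel V r).induce W).bdryTo K k) =
        LinearMap.range (((skel V r).induce W).bdry K k) :=
      le_antisymm
        (SC.ker_bdryTo_le_range_bdry K _ (min'_le_of_mem_induce_faces hW) k
          (insert_min'_mem_induce_faces hW hk))
        (SC.range_bdry_le_ker_bdryTo K _ k)
    have hrank := LinearMap.finrank_range_add_finrank_ker (((skel V r).induce W).bdry K k)
    rw [← hexact, finrank_ker_induce_bdryTo hW k (by omega), finrank_induce_chain K hk] at hrank
    have hpascal := Nat.choose_succ_succ' (#W - 1) k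
    rw [Nat.sub_add_cancel (card_pos.2 hW)] at hpascal
    change Module.finrank K (LinearMap.ker (((skel V r).induce W).bdry K k)) = _
    omega

theorem hdim_induce (hW : W.Nonempty) (m : ℕ) :
    ((skel V r).induce W).hdim K m = if m = r then (#W - 1).choose r else 0 := by
  rcases lt_trichotomy m r with h | rfl | h
  · rw [if_neg h.ne]
    exact SC.hdim_eq_zero_of_cone K _ (min'_le_of_mem_induce_faces hW)
      (insert_min'_mem_induce_faces hW h)
  · have hrange := LinearMap.finrank_range_le (((skel V m).induce W).bdry K m)
    rw [finrank_induce_chain_of_lt K (Nat.lt_succ_self m)] at hrange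
    rw [if_pos rfl, SC.hdim, finrank_ker_induce_bdryTo K hW m le_rfl]
    omega
  · have hker := Submodule.finrank_le (LinearMap.ker (((skel V r).induce W).bdryTo K m))
    rw [finrank_induce_chain_of_lt K h] at hker
    rw [if_neg h.ne', SC.hdim]
    omega

theorem betti_of_pos [Fintype V] {i j : ℕ} (hj : 0 < j) :
    (skel V r).betti K i j =
      if j - i = r then (j - 1).choose r * (Fintype.card V).choose j else 0 := by
  have hW : ∀ W ∈ univ.powersetCard j, ((skel V r).induce W).hdim K (j - i) =
      if j - i = r then (j - 1).choose r else 0 := fun W hW => by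
    obtain ⟨-, hWj⟩ := mem_powersetCard.1 hW
    rw [hdim_induce K (card_pos.1 (hWj ▸ hj)), hWj]
  rw [SC.betti, sum_congr rfl hW]
  split_ifs
  · rw [sum_const, card_powersetCard, card_univ, smul_eq_mul, mul_comm]
  · exact sum_const_zero

end skel

theorem betti_complete_general (K : Type*) [Field K] (n r : ℕ) :
    (∀ i : ℕ, 1 ≤ i → i ≤ n - r →
      (skel (Fin n) r).betti K i (i + r) = (i + r - 1).choose r * n.choose (i + r)) ∧
    (∀ i d : ℕ, d ≠ r → (i, d) ≠ (0, 0) →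
      (skel (Fin n) r).betti K i (i + d) = 0) := by
  refine ⟨fun i hi _ => ?_, fun i d hd hid => ?_⟩
  · rw [skel.betti_of_pos K (by omega), if_pos (by omega), Fintype.card_fin]
  · have hj : 0 < i + d := by
      by_contra h
      exact hid (by rw [show i = 0 by omega, show d = 0 by omega])
    rw [skel.betti_of_pos K hj, if_neg (by omega)]

/-- Graded Betti numbers of `R/I_r(K_n)`, where `I_r(K_n)` is generated by all squarefree
monomials of degree `r+1` in `n` variables: `β_{i,i+r} = C(i+r-1, r) · C(n, i+r)` for
`1 ≤ i ≤ n-r`, and `β_{i,i+d} = 0` for `d ≠ r` with `(i,d) ≠ (0,0)`. -/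
theorem betti_complete (K : Type*) [Field K] (n r : ℕ) (hr : 1 ≤ r) (hn : r + 1 ≤ n) :
    (∀ i : ℕ, 1 ≤ i → i ≤ n - r →
      (skel (Fin n) r).betti K i (i + r) = (i + r - 1).choose r * n.choose (i + r)) ∧
    (∀ i d : ℕ, d ≠ r → (i, d) ≠ (0, 0) →
      (skel (Fin n) r).betti K i (i + d) = 0) :=
  betti_complete_general K n r
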